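/- arXiv:1503.05093 — 2 statements merged into one kernel-verified Lean document; each statement's English description precedes it below -/
import Mathlib

section
/- For every α ∈ (0,1], h_α(ℓ) := Φ̄⁻¹(α·Φ̄(ℓ)) - ℓ tends to 0 as ℓ → +∞. -/
open MeasureTheory Real Set

/-- Standard normal density. -/
noncomputable def phi (x : ℝ) : ℝ := (Real.sqrt (2 * Real.pi))⁻¹ * Real.exp (-x ^ 2 / 2)

/-- Upper tail of the standard normal distribution. -/
noncomputable def Phibar (x : ℝ) : ℝ := ∫ t in Set.Ioi x, phi t

/-- Inverse of the upper tail function `Φ̄ : ℝ → (0,1)`. -/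
noncomputable def PhibarInv : ℝ → ℝ := Function.invFun Phibar

/-- The function `h_α`. -/
noncomputable def halpha (α ℓ : ℝ) : ℝ := PhibarInv (α * Phibar ℓ) - ℓ

lemma phi_pos (x : ℝ) : 0 < phi x := by
  have h : 0 < Real.sqrt (2 * Real.pi) := Real.sqrt_pos.mpr (by positivity)
  exact mul_pos (inv_pos.mpr h) (Real.exp_pos _)

lemma integrable_phi : Integrable phi := by
  have h : Integrable fun x : ℝ => Real.exp (-(1/2 : ℝ) * x ^ 2) :=
    integrable_exp_neg_mul_sq (by norm_num)
  have : phi = fun x => (Real.sqrt (2 * Real.pi))⁻¹ * Real.exp (-(1/2 : ℝ) * x ^ 2) := by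
    funext x; unfold phi; ring_nf
  rw [this]
  exact h.const_mul _

lemma continuous_phi : Continuous phi := by
  unfold phi; fun_prop

lemma Phibar_eq (x : ℝ) : Phibar x = Phibar 0 - ∫ t in (0:ℝ)..x, phi t := by
  unfold Phibar
  have h0 : IntegrableOn phi (Iic (0:ℝ)) := integrable_phi.integrableOn
  have hx : IntegrableOn phi (Iic x) := integrable_phi.integrableOn
  have h1 : (∫ t in Iic x, phi t) - ∫ t in Iic (0:ℝ), phi t = ∫ t in (0:ℝ)..x, phi t :=
    intervalIntegral.integral_Iic_sub_Iic h0 hx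
  have h2 : (∫ t in Iic (0:ℝ), phi t) + ∫ t in Ioi (0:ℝ), phi t = ∫ t, phi t :=
    intervalIntegral.integral_Iic_add_Ioi h0 integrable_phi.integrableOn
  have h3 : (∫ t in Iic x, phi t) + ∫ t in Ioi x, phi t = ∫ t, phi t :=
    intervalIntegral.integral_Iic_add_Ioi hx integrable_phi.integrableOn
  linarith

lemma continuous_Phibar : Continuous Phibar := by
  have h : Continuous fun x => ∫ t in (0:ℝ)..x, phi t :=
    intervalIntegral.continuous_primitive
      (fun a b => integrable_phi.intervalIntegrable) 0
  have h2 : Phibar = fun x => Phibar 0 - ∫ t in (0:ℝ)..x, phi t := funext Phibar_eq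
  rw [h2]; exact continuous_const.sub h

lemma strictAnti_Phibar : StrictAnti Phibar := by
  intro x y hxy
  rw [Phibar_eq x, Phibar_eq y]
  have h : (0:ℝ) < ∫ t in x..y, phi t :=
    intervalIntegral.intervalIntegral_pos_of_pos
      integrable_phi.intervalIntegrable (fun t => phi_pos t) hxy
  have h3 : (∫ t in (0:ℝ)..x, phi t) + ∫ t in x..y, phi t = ∫ t in (0:ℝ)..y, phi t :=
    intervalIntegral.integral_add_adjacent_intervals
      integrable_phi.intervalIntegrable integrable_phi.intervalIntegrable
  linarith

lemma Phibar_nonneg (x : ℝ) : 0 ≤ Phibar x :=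
  setIntegral_nonneg measurableSet_Ioi (fun t _ => (phi_pos t).le)

/-- Tail ratio bound: `Φ̄(ℓ+a) ≤ exp(-(aℓ+a²/2)) Φ̄(ℓ)`. -/
lemma Phibar_add_le (a ℓ : ℝ) (ha : 0 < a) :
    Phibar (ℓ + a) ≤ Real.exp (-(a * ℓ + a ^ 2 / 2)) * Phibar ℓ := by
  have key : ∀ t ∈ Ioi (ℓ + a),
      phi t ≤ Real.exp (-(a * ℓ + a ^ 2 / 2)) * phi (t - a) := by
    intro t ht
    simp only [mem_Ioi] at ht
    unfold phi
    rw [mul_comm (Real.exp _), mul_assoc, ← Real.exp_add]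
    have hc : (0:ℝ) < (Real.sqrt (2 * Real.pi))⁻¹ := by
      have : 0 < Real.sqrt (2 * Real.pi) := Real.sqrt_pos.mpr (by positivity)
      positivity
    apply mul_le_mul_of_nonneg_left _ hc.le
    apply Real.exp_le_exp.mpr
    nlinarith [ht, ha]
  have hint1 : IntegrableOn phi (Ioi (ℓ + a)) := integrable_phi.integrableOn
  have hint2 : IntegrableOn (fun t => Real.exp (-(a * ℓ + a ^ 2 / 2)) * phi (t - a))
      (Ioi (ℓ + a)) := by
    apply Integrable.integrableOn
    exact ((integrable_phi.comp_sub_right a).const_mul _)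
  have hmono : Phibar (ℓ + a) ≤
      ∫ t in Ioi (ℓ + a), Real.exp (-(a * ℓ + a ^ 2 / 2)) * phi (t - a) := by
    unfold Phibar
    exact setIntegral_mono_on hint1 hint2 measurableSet_Ioi key
  have htrans : (∫ t in Ioi (ℓ + a), phi (t - a)) = Phibar ℓ := by
    unfold Phibar
    rw [← integral_indicator measurableSet_Ioi, ← integral_indicator measurableSet_Ioi]
    have heq : ∀ t : ℝ, (Ioi (ℓ + a)).indicator (fun t => phi (t - a)) t =
        (Ioi ℓ).indicator phi (t - a) := by
      intro t
      by_cases h : t ∈ Ioi (ℓ + a)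
      · rw [indicator_of_mem h, indicator_of_mem]
        simp only [mem_Ioi] at h ⊢; linarith
      · rw [indicator_of_notMem h, indicator_of_notMem]
        simp only [mem_Ioi, not_lt] at h ⊢; linarith
    simp_rw [heq]
    exact integral_sub_right_eq_self ((Ioi ℓ).indicator phi) a
  calc Phibar (ℓ + a) ≤ ∫ t in Ioi (ℓ + a), Real.exp (-(a * ℓ + a ^ 2 / 2)) * phi (t - a) :=
        hmono
    _ = Real.exp (-(a * ℓ + a ^ 2 / 2)) * ∫ t in Ioi (ℓ + a), phi (t - a) := by
        rw [integral_const_mul]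
    _ = Real.exp (-(a * ℓ + a ^ 2 / 2)) * Phibar ℓ := by rw [htrans]

open Filter in
/-- For `α ∈ (0,1]`, `h_α(ℓ) → 0` as `ℓ → +∞`. -/
theorem halpha_tendsto_zero {α : ℝ} (hα : α ∈ Set.Ioc (0 : ℝ) 1) :
    Filter.Tendsto (halpha α) Filter.atTop (nhds 0) := by
  obtain ⟨hα0, hα1⟩ := hα
  rw [NormedAddCommGroup.tendsto_nhds_zero]
  intro ε hε
  set a : ℝ := ε / 2 with ha_def
  have ha : 0 < a := by positivity
  -- eventually exp(-(aℓ+a²/2)) ≤ α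
  have hexp : Tendsto (fun ℓ : ℝ => Real.exp (-(a * ℓ + a ^ 2 / 2))) atTop (nhds 0) := by
    have h1 : Tendsto (fun ℓ : ℝ => a * ℓ + a ^ 2 / 2) atTop atTop :=
      tendsto_atTop_add_const_right _ _ (Tendsto.const_mul_atTop ha tendsto_id)
    exact Real.tendsto_exp_atBot.comp (tendsto_neg_atBot_iff.mpr h1)
  have hev : ∀ᶠ ℓ : ℝ in atTop, Real.exp (-(a * ℓ + a ^ 2 / 2)) ≤ α :=
    (hexp.eventually_lt_const hα0).mono fun ℓ h => h.le
  filter_upwards [hev] with ℓ hℓ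
  -- bounds on y = α * Phibar ℓ
  have hub : Phibar (ℓ + a) ≤ α * Phibar ℓ := by
    calc Phibar (ℓ + a) ≤ Real.exp (-(a * ℓ + a ^ 2 / 2)) * Phibar ℓ := Phibar_add_le a ℓ ha
      _ ≤ α * Phibar ℓ := mul_le_mul_of_nonneg_right hℓ (Phibar_nonneg ℓ)
  have hlb : α * Phibar ℓ ≤ Phibar ℓ := by
    nlinarith [Phibar_nonneg ℓ]
  -- IVT
  obtain ⟨x, hx_mem, hx_eq⟩ : ∃ x ∈ Icc ℓ (ℓ + a), Phibar x = α * Phibar ℓ := by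
    have h := intermediate_value_Icc' (by linarith : ℓ ≤ ℓ + a)
      continuous_Phibar.continuousOn
    have hy : α * Phibar ℓ ∈ Icc (Phibar (ℓ + a)) (Phibar ℓ) := ⟨hub, hlb⟩
    obtain ⟨x, hx1, hx2⟩ := h hy
    exact ⟨x, hx1, hx2⟩
  have hinv : PhibarInv (α * Phibar ℓ) = x := by
    rw [← hx_eq]
    exact Function.leftInverse_invFun strictAnti_Phibar.injective x
  have : halpha α ℓ = x - ℓ := by unfold halpha; rw [hinv]
  rw [this]
  obtain ⟨h1, h2⟩ := hx_mem
  rw [Real.norm_eq_abs, abs_of_nonneg (by linarith)]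
  have : a < ε := by rw [ha_def]; linarith
  linarith
end

section
/- Let Z ∼ N₂(0, Σ) in ℝ² and let T ⊆ ℝ² be a measurable set that is symmetric with respect to both coordinate axes and such that every intersection of T with a horizontal or vertical line is an interval. Assume Σ is diagonal. Then for each fixed μ₁, the function μ₂ ↦ P(Z + (μ₁, μ₂) ∈ T) is non-increasing on [0, ∞), and symmetrically in the other coordinate. -/
open MeasureTheory ProbabilityTheory Set
open scoped NNReal

/-!
By independence the law of `Z + (μ₁, μ₂)` is a product measure, so by Fubini the probability
that it lies in `T` is the integral over the first coordinate of the Gaussian measure of the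
translated vertical section of `T`. Each section is all of `ℝ` or, up to its endpoints, a
symmetric interval `[-r, r]`, and `μ ↦ ∫_{-r-μ}^{r-μ} φ` has derivative `φ(r + μ) - φ(r - μ) ≤ 0`
for `μ ≥ 0`, since the Gaussian density `φ` is even and decreasing in `|x|`. The other
coordinate follows by swapping.
-/

lemma gaussianPDFReal_zero_le_of_abs_le (v : ℝ≥0) {x y : ℝ} (h : |x| ≤ |y|) :
    gaussianPDFReal 0 v y ≤ gaussianPDFReal 0 v x := by
  simp only [gaussianPDFReal, sub_zero]
  gcongr _ * Real.exp (-?_ / _)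
  exact sq_le_sq.2 h

lemma continuous_gaussianPDFReal (μ : ℝ) (v : ℝ≥0) : Continuous (gaussianPDFReal μ v) := by
  unfold gaussianPDFReal
  fun_prop

lemma antitoneOn_intervalIntegral_neg_sub_sub {f : ℝ → ℝ} (hf : Continuous f)
    (hf_abs : ∀ x y, |x| ≤ |y| → f y ≤ f x) {r : ℝ} (hr : 0 ≤ r) :
    AntitoneOn (fun μ => ∫ x in (-r - μ)..(r - μ), f x) (Ici 0) := by
  set F : ℝ → ℝ := fun u => ∫ x in (0 : ℝ)..u, f x
  have hF : ∀ u, HasDerivAt F (f u) u := fun u => (hf.integral_hasStrictDerivAt 0 u).hasDerivAt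
  have hsplit : (fun μ => ∫ x in (-r - μ)..(r - μ), f x) = fun μ => F (r - μ) - F (-r - μ) :=
    funext fun μ => (intervalIntegral.integral_interval_sub_left
      (hf.intervalIntegrable _ _) (hf.intervalIntegrable _ _)).symm
  have hderiv : ∀ μ, HasDerivAt (fun μ => F (r - μ) - F (-r - μ))
      (f (-r - μ) - f (r - μ)) μ := by
    intro μ
    have := ((hF (r - μ)).comp_const_sub r μ).sub ((hF (-r - μ)).comp_const_sub (-r) μ)
    rwa [neg_sub_neg] at this
  rw [hsplit]
  refine antitoneOn_of_hasDerivWithinAt_nonpos (convex_Ici 0)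
    (fun μ _ => (hderiv μ).continuousAt.continuousWithinAt)
    (fun μ _ => (hderiv μ).hasDerivWithinAt) fun μ hμ => ?_
  rw [interior_Ici, mem_Ioi] at hμ
  have habs : |r - μ| ≤ |-r - μ| := by
    rw [abs_of_nonpos (by linarith : -r - μ ≤ 0)]
    exact abs_le.2 ⟨by linarith, by linarith⟩
  linarith [hf_abs _ _ habs]

lemma gaussianReal_Icc (μ : ℝ) {v : ℝ≥0} (hv : v ≠ 0) {p q : ℝ} (hpq : p ≤ q) :
    gaussianReal μ v (Icc p q) = ENNReal.ofReal (∫ x in p..q, gaussianPDFReal μ v x) := by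
  rw [gaussianReal_apply_eq_integral μ hv, integral_Icc_eq_integral_Ioc,
    intervalIntegral.integral_of_le hpq]

section SymmetricInterval

variable {S : Set ℝ}

lemma exists_Ioo_subset_subset_Icc_of_neg_eq (hsymm : -S = S) (hS : S.OrdConnected)
    (hbdd : BddAbove S) : ∃ r, 0 ≤ r ∧ Ioo (-r) r ⊆ S ∧ S ⊆ Icc (-r) r := by
  rcases S.eq_empty_or_nonempty with rfl | ⟨y, hy⟩
  · exact ⟨0, le_rfl, by simp, empty_subset _⟩
  have hbdd' : BddBelow S := hsymm ▸ bddBelow_neg.2 hbdd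
  have hinf : sInf S = -sSup S := by
    conv_lhs => rw [← hsymm]
    exact Real.sInf_neg S
  have hIcc := subset_Icc_csInf_csSup hbdd' hbdd
  rw [hinf] at hIcc
  refine ⟨sSup S, ?_, ?_, hIcc⟩
  · linarith [(hIcc hy).1, (hIcc hy).2]
  · rw [← hinf]
    exact IsConnected.Ioo_csInf_csSup_subset ⟨⟨y, hy⟩, hS.isPreconnected⟩ hbdd' hbdd

lemma eq_univ_of_neg_eq_of_not_bddAbove (hsymm : -S = S) (hS : S.OrdConnected)
    (hbdd : ¬BddAbove S) : S = univ := by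
  refine eq_univ_of_forall fun z => ?_
  obtain ⟨w, hw, hzw⟩ := not_bddAbove_iff.1 hbdd |z|
  have hnw : -w ∈ S := by rw [← hsymm]; simpa using hw
  exact hS.out hnw hw (abs_le.1 hzw.le)

lemma gaussianReal_preimage_add_const_eq_Icc {v : ℝ≥0} (hv : v ≠ 0) {r : ℝ}
    (hIoo : Ioo (-r) r ⊆ S) (hIcc : S ⊆ Icc (-r) r) (μ : ℝ) :
    gaussianReal 0 v ((· + μ) ⁻¹' S) = gaussianReal 0 v (Icc (-r - μ) (r - μ)) := by
  have := nullSingletonClass_gaussianReal (μ := 0) hv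
  refine le_antisymm ?_ ?_
  · rw [← preimage_add_const_Icc]
    exact measure_mono (preimage_mono hIcc)
  · rw [← measure_congr Ioo_ae_eq_Icc, ← preimage_add_const_Ioo]
    exact measure_mono (preimage_mono hIoo)

theorem antitoneOn_gaussianReal_preimage_add_const (v : ℝ≥0) (hsymm : -S = S)
    (hS : S.OrdConnected) : AntitoneOn (fun μ => gaussianReal 0 v ((· + μ) ⁻¹' S)) (Ici 0) := by
  intro a ha b hb hab
  rcases eq_or_ne v 0 with rfl | hv
  · simp only [gaussianReal_zero_var, Measure.dirac_apply]
    by_cases hbS : b ∈ S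
    · have hnb : -b ∈ S := by rw [← hsymm]; simpa using hbS
      simp [indicator, hbS, hS.out hnb hbS ⟨by linarith [mem_Ici.1 ha], hab⟩]
    · simp [indicator, hbS]
  by_cases hbdd : BddAbove S
  · obtain ⟨r, hr, hIoo, hIcc⟩ := exists_Ioo_subset_subset_Icc_of_neg_eq hsymm hS hbdd
    simp only [gaussianReal_preimage_add_const_eq_Icc hv hIoo hIcc,
      gaussianReal_Icc 0 hv (by linarith : -r - a ≤ r - a),
      gaussianReal_Icc 0 hv (by linarith : -r - b ≤ r - b)]
    exact ENNReal.ofReal_le_ofReal <| antitoneOn_intervalIntegral_neg_sub_sub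
      (continuous_gaussianPDFReal 0 v) (fun _ _ => gaussianPDFReal_zero_le_of_abs_le v) hr
      ha hb hab
  · simp [eq_univ_of_neg_eq_of_not_bddAbove hsymm hS hbdd]

end SymmetricInterval

theorem antitoneOn_measure_mem_add_of_indepFun {Ω : Type*} [MeasurableSpace Ω]
    {P : Measure Ω} [IsFiniteMeasure P] {X Y : Ω → ℝ} (hX : Measurable X) (hY : Measurable Y)
    (hXY : IndepFun X Y P) {v : ℝ≥0} (hY_law : P.map Y = gaussianReal 0 v)
    {T : Set (ℝ × ℝ)} (hT : MeasurableSet T) (hsymm : ∀ x y, (x, y) ∈ T ↔ (x, -y) ∈ T)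
    (hconn : ∀ x, OrdConnected {y | (x, y) ∈ T}) :
    AntitoneOn (fun μ => P {ω | (X ω, Y ω + μ) ∈ T}) (Ici 0) := by
  have hmap : P.map (fun ω => (X ω, Y ω)) = (P.map X).prod (gaussianReal 0 v) :=
    hY_law ▸ (indepFun_iff_map_prod_eq_prod_map_map hX.aemeasurable hY.aemeasurable).1 hXY
  have hfubini : ∀ μ, P {ω | (X ω, Y ω + μ) ∈ T} =
      ∫⁻ x, gaussianReal 0 v ((· + μ) ⁻¹' {y | (x, y) ∈ T}) ∂P.map X := by
    intro μ
    have hTμ : MeasurableSet {p : ℝ × ℝ | (p.1, p.2 + μ) ∈ T} := hT.preimage (by fun_prop)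
    calc P {ω | (X ω, Y ω + μ) ∈ T}
        = P.map (fun ω => (X ω, Y ω)) {p | (p.1, p.2 + μ) ∈ T} :=
          (Measure.map_apply (hX.prodMk hY) hTμ).symm
      _ = _ := by rw [hmap, Measure.prod_apply hTμ]; rfl
  intro a ha b hb hab
  simp only [hfubini]
  exact lintegral_mono fun x => antitoneOn_gaussianReal_preimage_add_const v
    (Set.ext fun y => (hsymm x y).symm) (hconn x) ha hb hab

theorem two_dim_anderson_general {Ω : Type*} [MeasurableSpace Ω]
    (P : Measure Ω) [IsProbabilityMeasure P]
    (Z₁ Z₂ : Ω → ℝ) (hZ₁ : Measurable Z₁) (hZ₂ : Measurable Z₂)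
    {σ₁ σ₂ : ℝ≥0}
    (hlaw₁ : P.map Z₁ = gaussianReal 0 (σ₁ ^ 2))
    (hlaw₂ : P.map Z₂ = gaussianReal 0 (σ₂ ^ 2))
    (hindep : ProbabilityTheory.IndepFun Z₁ Z₂ P)
    (T : Set (ℝ × ℝ)) (hTmeas : MeasurableSet T)
    (hsymm₁ : ∀ x y : ℝ, (x, y) ∈ T ↔ (-x, y) ∈ T)
    (hsymm₂ : ∀ x y : ℝ, (x, y) ∈ T ↔ (x, -y) ∈ T)
    (hvert : ∀ x y₁ y₂ y₃ : ℝ, y₁ ≤ y₂ → y₂ ≤ y₃ →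
      (x, y₁) ∈ T → (x, y₃) ∈ T → (x, y₂) ∈ T)
    (hhoriz : ∀ y x₁ x₂ x₃ : ℝ, x₁ ≤ x₂ → x₂ ≤ x₃ →
      (x₁, y) ∈ T → (x₃, y) ∈ T → (x₂, y) ∈ T) :
    (∀ μ₁ : ℝ, ∀ a b : ℝ, 0 ≤ a → a ≤ b →
        P {ω | (Z₁ ω + μ₁, Z₂ ω + b) ∈ T} ≤ P {ω | (Z₁ ω + μ₁, Z₂ ω + a) ∈ T}) ∧
    (∀ μ₂ : ℝ, ∀ a b : ℝ, 0 ≤ a → a ≤ b →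
        P {ω | (Z₁ ω + b, Z₂ ω + μ₂) ∈ T} ≤ P {ω | (Z₁ ω + a, Z₂ ω + μ₂) ∈ T}) := by
  have hconn₂ : ∀ x, OrdConnected {y | (x, y) ∈ T} :=
    fun x => ⟨fun _ h₁ _ h₃ _ hy => hvert x _ _ _ hy.1 hy.2 h₁ h₃⟩
  have hconn₁ : ∀ y, OrdConnected {x | (x, y) ∈ T} :=
    fun y => ⟨fun _ h₁ _ h₃ _ hx => hhoriz y _ _ _ hx.1 hx.2 h₁ h₃⟩
  refine ⟨fun μ₁ a b ha hab => ?_, fun μ₂ a b ha hab => ?_⟩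
  · exact antitoneOn_measure_mem_add_of_indepFun (hZ₁.add_const μ₁) hZ₂
      (hindep.comp (measurable_add_const μ₁) measurable_id) hlaw₂
      hTmeas hsymm₂ hconn₂ ha (ha.trans hab) hab
  · exact antitoneOn_measure_mem_add_of_indepFun (hZ₂.add_const μ₂) hZ₁
      (hindep.symm.comp (measurable_add_const μ₂) measurable_id) hlaw₁
      (hTmeas.preimage measurable_swap) (fun x y => hsymm₁ y x) hconn₁ ha (ha.trans hab) hab

/-- Two-dimensional Anderson-type monotonicity: if `Z = (Z₁, Z₂)` are independent centered
Gaussians (diagonal covariance), and `T ⊆ ℝ²` is measurable, symmetric with respect to both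
coordinate axes, and every horizontal or vertical section of `T` is an interval, then for each
fixed `μ₁` the map `μ₂ ↦ P(Z + (μ₁, μ₂) ∈ T)` is non-increasing on `[0,∞)`, and symmetrically
in the other coordinate. -/
theorem two_dim_anderson {Ω : Type*} [MeasurableSpace Ω]
    (P : Measure Ω) [IsProbabilityMeasure P]
    (Z₁ Z₂ : Ω → ℝ) (hZ₁ : Measurable Z₁) (hZ₂ : Measurable Z₂)
    {σ₁ σ₂ : ℝ≥0} (hσ₁ : 0 < σ₁) (hσ₂ : 0 < σ₂)
    (hlaw₁ : P.map Z₁ = gaussianReal 0 (σ₁ ^ 2))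
    (hlaw₂ : P.map Z₂ = gaussianReal 0 (σ₂ ^ 2))
    (hindep : ProbabilityTheory.IndepFun Z₁ Z₂ P)
    (T : Set (ℝ × ℝ)) (hTmeas : MeasurableSet T)
    (hsymm₁ : ∀ x y : ℝ, (x, y) ∈ T ↔ (-x, y) ∈ T)
    (hsymm₂ : ∀ x y : ℝ, (x, y) ∈ T ↔ (x, -y) ∈ T)
    (hvert : ∀ x y₁ y₂ y₃ : ℝ, y₁ ≤ y₂ → y₂ ≤ y₃ →
      (x, y₁) ∈ T → (x, y₃) ∈ T → (x, y₂) ∈ T)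
    (hhoriz : ∀ y x₁ x₂ x₃ : ℝ, x₁ ≤ x₂ → x₂ ≤ x₃ →
      (x₁, y) ∈ T → (x₃, y) ∈ T → (x₂, y) ∈ T) :
    (∀ μ₁ : ℝ, ∀ a b : ℝ, 0 ≤ a → a ≤ b →
        P {ω | (Z₁ ω + μ₁, Z₂ ω + b) ∈ T} ≤ P {ω | (Z₁ ω + μ₁, Z₂ ω + a) ∈ T}) ∧
    (∀ μ₂ : ℝ, ∀ a b : ℝ, 0 ≤ a → a ≤ b →
        P {ω | (Z₁ ω + b, Z₂ ω + μ₂) ∈ T} ≤ P {ω | (Z₁ ω + a, Z₂ ω + μ₂) ∈ T}) :=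
  two_dim_anderson_general P Z₁ Z₂ hZ₁ hZ₂ hlaw₁ hlaw₂ hindep T hTmeas hsymm₁ hsymm₂ hvert hhoriz
end
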